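/- Let P, R, Q be formal power series in one variable X with natural number coefficients satisfying P = R + (1 + X)·Q. If the coefficient of X^j in P vanishes for every odd j, then Q = 0 and consequently P = R. -/

import Mathlib

/-! The coefficient of `X^(n+1)` in `R + (1 + X) * Q` is `r (n+1) + q (n+1) + q n`. With
nonnegative coefficients a vanishing sum forces every summand to vanish, so each odd
coefficient of `P` kills two consecutive coefficients of `Q`, and these pairs cover all of `Q`. -/

namespace PowerSeries

variable {S : Type*} [CommSemiring S]

theorem coeff_succ_one_add_X_mul (Q : S⟦X⟧) (n : ℕ) :
    coeff (n + 1) ((1 + X) * Q) = coeff (n + 1) Q + coeff n Q := by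
  rw [add_mul, one_mul, map_add, coeff_succ_X_mul]

variable [PartialOrder S] [CanonicallyOrderedAdd S]

theorem coeff_eq_zero_of_coeff_succ_add_one_add_X_mul_eq_zero {R Q : S⟦X⟧} {n : ℕ}
    (h : coeff (n + 1) (R + (1 + X) * Q) = 0) :
    coeff (n + 1) Q = 0 ∧ coeff n Q = 0 := by
  rw [map_add, coeff_succ_one_add_X_mul] at h
  exact add_eq_zero.1 (add_eq_zero.1 h).2

theorem eq_zero_of_odd_coeff_add_one_add_X_mul_eq_zero {R Q : S⟦X⟧}
    (hodd : ∀ j : ℕ, Odd j → coeff j (R + (1 + X) * Q) = 0) : Q = 0 := by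
  ext m
  rw [map_zero]
  rcases Nat.even_or_odd m with hm | hm
  · exact (coeff_eq_zero_of_coeff_succ_add_one_add_X_mul_eq_zero (hodd (m + 1) hm.add_one)).2
  · obtain ⟨n, rfl⟩ : ∃ n, m = n + 1 := Nat.exists_eq_add_one.2 hm.pos
    exact (coeff_eq_zero_of_coeff_succ_add_one_add_X_mul_eq_zero (hodd (n + 1) hm)).1

end PowerSeries

/-- Lacunary Principle: If `P, R, Q` are formal power series with
natural number coefficients with `P = R + (1 + X) * Q` and every odd
coefficient of `P` vanishes, then `Q = 0` and `P = R`. -/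
theorem lacunary_principle
    (P R Q : PowerSeries ℕ)
    (h : P = R + (1 + PowerSeries.X) * Q)
    (hodd : ∀ j : ℕ, Odd j → PowerSeries.coeff j P = 0) :
    Q = 0 ∧ P = R := by
  subst h
  have hQ : Q = 0 := PowerSeries.eq_zero_of_odd_coeff_add_one_add_X_mul_eq_zero hodd
  exact ⟨hQ, by rw [hQ, mul_zero, add_zero]⟩
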